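/- arXiv:1106.0660 — 4 statements merged into one kernel-verified Lean document; each statement's English description precedes it below -/
import Mathlib

section
/- Let a, b ≥ 0, c ≥ 0, and d > a, let H be a random variable with values in [0,1] such that H and 1 − H have the same law, and let r(x) = cx + d. Set τ = c/(d − a) and V₁(x) = τx + 1. Then for every x > 0, a x V₁'(x) + b x V₁''(x) + r(x)(2E[V₁(Hx)] − V₁(x)) = d V₁(x); that is, V₁ is a positive eigenvector of 𝒢 with eigenvalue λ₁ = d. -/
/-!
The affine function `V₁` has `V₁' = τ` and `V₁'' = 0`, and symmetry of `H` forces `E[H] = 1/2`,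
so `2E[V₁(Hx)] − V₁(x) = 1`. The left side is therefore `a x τ + c x + d`, which equals
`d (τ x + 1)` exactly because `τ (d − a) = c`.
-/

open MeasureTheory

theorem integral_eq_one_half_of_map_eq_map_one_sub {Ω : Type*} [MeasurableSpace Ω]
    {μ : Measure Ω} [IsProbabilityMeasure μ] {H : Ω → ℝ} (hH : Integrable H μ)
    (hH_sym : μ.map H = μ.map (fun ω => 1 - H ω)) :
    ∫ ω, H ω ∂μ = 1 / 2 := by
  have hH_one_sub : Integrable (fun ω => 1 - H ω) μ := (integrable_const 1).sub hH
  have h_eq : ∫ ω, H ω ∂μ = ∫ ω, (1 - H ω) ∂μ := by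
    rw [← integral_map hH.aemeasurable (f := fun y => y) aestronglyMeasurable_id, hH_sym,
      integral_map hH_one_sub.aemeasurable (f := fun y => y) aestronglyMeasurable_id]
  rw [integral_sub (integrable_const 1) hH, integral_const, probReal_univ, one_smul] at h_eq
  linarith

theorem parasite_eigenvector_affine_general {Ω : Type*} [MeasurableSpace Ω]
    (μ : Measure Ω) [IsProbabilityMeasure μ]
    (a b c d : ℝ) (hd : a < d)
    (H : Ω → ℝ) (hH_meas : Measurable H) (hH01 : ∀ ω, H ω ∈ Set.Icc (0 : ℝ) 1)
    (hH_sym : Measure.map H μ = Measure.map (fun ω => 1 - H ω) μ) :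
    ∀ x > (0 : ℝ),
      a * x * deriv (fun y : ℝ => (c / (d - a)) * y + 1) x
          + b * x * deriv (deriv (fun y : ℝ => (c / (d - a)) * y + 1)) x
          + (c * x + d) *
            (2 * (∫ ω, ((c / (d - a)) * (H ω * x) + 1) ∂μ)
              - ((c / (d - a)) * x + 1))
        = d * ((c / (d - a)) * x + 1) := by
  intro x _
  have hH_int : Integrable H μ :=
    .of_bound hH_meas.aestronglyMeasurable 1 <| .of_forall fun ω => by
      rw [Real.norm_of_nonneg (hH01 ω).1]
      exact (hH01 ω).2
  have h_mean : ∫ ω, ((c / (d - a)) * (H ω * x) + 1) ∂μ = c / (d - a) * x / 2 + 1 := by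
    rw [integral_add ((hH_int.mul_const x).const_mul _) (integrable_const 1), integral_const_mul,
      integral_mul_const, integral_eq_one_half_of_map_eq_map_one_sub hH_int hH_sym]
    simp only [integral_const, probReal_univ, one_smul]
    ring
  have hda : d - a ≠ 0 := (sub_pos.2 hd).ne'
  have h_deriv : deriv (fun y : ℝ => c / (d - a) * y + 1) = fun _ => c / (d - a) := by
    funext y
    simp
  rw [h_deriv, deriv_const, h_mean]
  field_simp
  ring

/-- **`V₁(x) = τx + 1` is an eigenvector with eigenvalue `d` when `r(x) = cx + d`.**
In the parasite-infection model with symmetric fraction `H` (`H ~ 1 − H`) and affine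
division rate `r(x) = c x + d` with `d > a`, the function `V₁(x) = τ x + 1` with
`τ = c/(d − a)` satisfies
`a x V₁'(x) + b x V₁''(x) + r(x)(2E[V₁(Hx)] − V₁(x)) = d V₁(x)` for all `x > 0`. -/
theorem parasite_eigenvector_affine {Ω : Type*} [MeasurableSpace Ω]
    (μ : Measure Ω) [IsProbabilityMeasure μ]
    (a b c d : ℝ) (ha : 0 ≤ a) (hb : 0 ≤ b) (hc : 0 ≤ c) (hd : a < d)
    (H : Ω → ℝ) (hH_meas : Measurable H) (hH01 : ∀ ω, H ω ∈ Set.Icc (0 : ℝ) 1)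
    (hH_sym : Measure.map H μ = Measure.map (fun ω => 1 - H ω) μ) :
    ∀ x > (0 : ℝ),
      a * x * deriv (fun y : ℝ => (c / (d - a)) * y + 1) x
          + b * x * deriv (deriv (fun y : ℝ => (c / (d - a)) * y + 1)) x
          + (c * x + d) *
            (2 * (∫ ω, ((c / (d - a)) * (H ω * x) + 1) ∂μ)
              - ((c / (d - a)) * x + 1))
        = d * ((c / (d - a)) * x + 1) :=
  parasite_eigenvector_affine_general μ a b c d hd H hH_meas hH01 hH_sym
end

section
/- Let r > 0. Define c₀ = 1 and cₙ = ∏_{k=1}^{n} 2/(1 − 2^k) for n ≥ 1, and let p(x) = ∑_{n=0}^{∞} cₙ e^{−2^{n+1} r x} for x ≥ 0. Then the series converges absolutely for every x ≥ 0, p is differentiable on (0,∞) and satisfies p'(x) = 4r p(2x) − 2r p(x) for all x > 0, p(x) ≥ 0 for all x ≥ 0, and ∫₀^∞ p(x) dx = (1/(2r)) ∏_{n=1}^{∞} (1 − 2^{−n}). Consequently φ(x) = (2r/∏_{n=1}^{∞}(1 − 2^{−n})) p(x) is a probability density on (0,∞), and for every continuously differentiable f with compact support contained in (0,∞), ∫₀^∞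 [f'(x) + 2r(f(x/2) − f(x))] φ(x) dx = 0. -/
/-!
With `E = exp (-2 r x)` the density is `p x = E * G E` for the lacunary series
`G = mitLacunary`, `G u = ∑ cₙ u ^ (2ⁿ - 1)`. The recursion `cₙ₊₁ (1 - 2ⁿ⁺¹) = 2 cₙ` is exactly
what makes `G' u = -2 G (u²)`, which is the differential equation for `p`; it also makes the
ordinary generating function `A = mitGenFun`, `A q = ∑ cₙ qⁿ`, satisfy `A q = (1 - q) A (q / 2)`.
Hence `G 1 = A 1 = 0`, and iterating from `q = 1/2` while `A (2⁻ᴺ) → A 0 = 1` gives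
`∫ p = A (1/2) / (2 r) = ∏ (1 - 2⁻ⁿ) / (2 r)`.
Positivity comes from `u G u = ∫_{u²}^{u} G`: at a first zero `u₀ ∈ (0, 1)` of `G` the left side
vanishes while the right side is positive. Invariance is an integration by parts against the
differential equation, after the substitution `x ↦ 2 x` in the `f (x / 2)` term.
-/

open MeasureTheory

/-- The coefficients `c₀ = 1`, `cₙ = ∏_{k=1}^{n} 2/(1 − 2^k)` of the explicit invariant
density of the TCP process. -/
noncomputable def mitCoef (n : ℕ) : ℝ := ∏ k ∈ Finset.Icc 1 n, 2 / (1 - (2 : ℝ) ^ k)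

/-- The (unnormalized) invariant density `p(x) = ∑ₙ cₙ e^{−2^{n+1} r x}` of the TCP
process with constant rate `r`. -/
noncomputable def mitDensity (r x : ℝ) : ℝ :=
  ∑' n : ℕ, mitCoef n * Real.exp (-(2 ^ (n + 1) * r * x))

open Set Filter Topology

lemma mitCoef_zero : mitCoef 0 = 1 := by simp [mitCoef]

lemma one_lt_two_pow_succ (n : ℕ) : (1 : ℝ) < 2 ^ (n + 1) :=
  one_lt_pow₀ one_lt_two n.succ_ne_zero

lemma mitCoef_succ (n : ℕ) : mitCoef (n + 1) = mitCoef n * (2 / (1 - 2 ^ (n + 1))) := by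
  rw [mitCoef, mitCoef, Finset.prod_Icc_succ_top (by omega)]

lemma mitCoef_succ_mul (n : ℕ) : mitCoef (n + 1) * (1 - 2 ^ (n + 1)) = 2 * mitCoef n := by
  have : (1 : ℝ) - 2 ^ (n + 1) ≠ 0 := by linarith [one_lt_two_pow_succ n]
  rw [mitCoef_succ]
  field_simp

lemma abs_mitCoef_succ (n : ℕ) :
    |mitCoef (n + 1)| = |mitCoef n| * (2 / (2 ^ (n + 1) - 1)) := by
  rw [mitCoef_succ, abs_mul, abs_div, abs_two,
    abs_of_neg (by linarith [one_lt_two_pow_succ n] : (1 : ℝ) - 2 ^ (n + 1) < 0), neg_sub]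

/-- Ratio test: consecutive terms have ratio `4 / (2 ^ (n + 1) - 1) ≤ 4 / 7` once `n ≥ 2`. -/
lemma summable_abs_mitCoef_mul_two_pow : Summable fun n => |mitCoef n| * 2 ^ n := by
  refine summable_of_ratio_norm_eventually_le (r := 4 / 7) (by norm_num) ?_
  filter_upwards [eventually_ge_atTop 2] with n hn
  have h8 : (8 : ℝ) ≤ 2 ^ (n + 1) := by
    calc (8 : ℝ) = 2 ^ 3 := by norm_num
      _ ≤ 2 ^ (n + 1) := pow_le_pow_right₀ one_le_two (by omega)
  have hratio : 2 / ((2 : ℝ) ^ (n + 1) - 1) * 2 ≤ 4 / 7 := by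
    rw [div_mul_eq_mul_div, div_le_div_iff₀ (by linarith) (by norm_num)]
    linarith
  simp only [Real.norm_eq_abs, abs_mul, abs_abs, abs_pow, abs_two]
  rw [abs_mitCoef_succ, pow_succ]
  calc |mitCoef n| * (2 / (2 ^ (n + 1) - 1)) * (2 ^ n * 2)
      = (2 / (2 ^ (n + 1) - 1) * 2) * (|mitCoef n| * 2 ^ n) := by ring
    _ ≤ 4 / 7 * (|mitCoef n| * 2 ^ n) := by gcongr

lemma summable_abs_mitCoef_mul_pow {q : ℝ} (hq : |q| ≤ 2) :
    Summable fun n => |mitCoef n * q ^ n| := by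
  refine summable_abs_mitCoef_mul_two_pow.of_nonneg_of_le (fun _ => abs_nonneg _) fun n => ?_
  rw [abs_mul, abs_pow]
  gcongr

lemma summable_abs_mitCoef : Summable fun n => |mitCoef n| := by
  simpa using summable_abs_mitCoef_mul_pow (q := 1) (by norm_num)

noncomputable def mitGenFun (q : ℝ) : ℝ := ∑' n, mitCoef n * q ^ n

lemma mitGenFun_zero : mitGenFun 0 = 1 := by
  rw [mitGenFun, tsum_eq_single 0 fun n hn => by simp [hn], mitCoef_zero, pow_zero, mul_one]

lemma continuousOn_mitGenFun : ContinuousOn mitGenFun (Icc (-2) 2) :=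
  continuousOn_tsum (fun n => (continuous_const.mul (continuous_pow n)).continuousOn)
    summable_abs_mitCoef_mul_two_pow fun _ q hq => by
      rw [Real.norm_eq_abs, abs_mul, abs_pow]
      gcongr
      exact abs_le.2 hq

lemma mitGenFun_eq_one_sub_mul {q : ℝ} (hq : |q| ≤ 2) :
    mitGenFun q = (1 - q) * mitGenFun (q / 2) := by
  have hq2 : |q / 2| ≤ 2 := by rw [abs_div, abs_two]; linarith
  have hhalf : HasSum (fun n => mitCoef n * (q / 2) ^ n) (mitGenFun (q / 2)) :=
    (summable_abs_mitCoef_mul_pow hq2).of_abs.hasSum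
  have hshift : HasSum
      (fun n => mitCoef (n + 1) * q ^ (n + 1) - mitCoef (n + 1) * (q / 2) ^ (n + 1))
      (-q * mitGenFun (q / 2)) := by
    refine (hhalf.mul_left (-q)).congr_fun fun n => ?_
    have := mitCoef_succ_mul n
    rw [div_pow, div_pow, pow_succ 2 n]
    field_simp
    linear_combination (-q * q ^ n) * this
  have hdiff : HasSum (fun n => mitCoef n * q ^ n - mitCoef n * (q / 2) ^ n)
      (-q * mitGenFun (q / 2)) := by
    rw [← hasSum_nat_add_iff' 1]
    simpa using hshift
  have := (hdiff.add hhalf).tsum_eq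
  simp only [sub_add_cancel] at this
  rw [mitGenFun, this]
  ring

lemma mitGenFun_one : mitGenFun 1 = 0 := by
  simpa using mitGenFun_eq_one_sub_mul (q := 1) (by norm_num)

lemma mitGenFun_two_inv_eq_prod_mul (N : ℕ) :
    mitGenFun 2⁻¹ =
      (∏ k ∈ Finset.range N, (1 - (2 : ℝ)⁻¹ ^ (k + 1))) * mitGenFun (2⁻¹ ^ (N + 1)) := by
  induction N with
  | zero => simp
  | succ N ih =>
    have hq : |(2 : ℝ)⁻¹ ^ (N + 1)| ≤ 2 := by
      rw [abs_of_nonneg (by positivity)]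
      exact (pow_le_one₀ (by norm_num) (by norm_num)).trans one_le_two
    rw [ih, mitGenFun_eq_one_sub_mul hq, Finset.prod_range_succ, pow_succ _ (N + 1),
      ← div_eq_mul_inv]
    ring

lemma tendsto_mitGenFun_two_inv_pow :
    Tendsto (fun N : ℕ => mitGenFun (2⁻¹ ^ (N + 1))) atTop (𝓝 1) := by
  have hpow : Tendsto (fun N : ℕ => (2 : ℝ)⁻¹ ^ (N + 1)) atTop (𝓝[Icc (-2) 2] 0) := by
    refine tendsto_nhdsWithin_iff.2 ⟨?_, Eventually.of_forall fun N => ?_⟩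
    · exact (tendsto_pow_atTop_nhds_zero_of_lt_one (by norm_num) (by norm_num)).comp
        (tendsto_add_atTop_nat 1)
    · have : (2 : ℝ)⁻¹ ^ (N + 1) ≤ 1 := pow_le_one₀ (by norm_num) (by norm_num)
      constructor <;> linarith [pow_nonneg (by norm_num : (0 : ℝ) ≤ 2⁻¹) (N + 1)]
  have hcont : Tendsto mitGenFun (𝓝[Icc (-2) 2] 0) (𝓝 (mitGenFun 0)) :=
    continuousOn_mitGenFun 0 (by norm_num)
  rw [mitGenFun_zero] at hcont
  exact hcont.comp hpow

lemma multipliable_one_sub_two_inv_pow :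
    Multipliable fun n : ℕ => 1 - (2 : ℝ)⁻¹ ^ (n + 1) := by
  have hsum : Summable fun n : ℕ => (2 : ℝ)⁻¹ ^ (n + 1) :=
    (summable_nat_add_iff 1).2 (summable_geometric_of_lt_one (by norm_num) (by norm_num))
  simpa only [sub_eq_add_neg] using Real.multipliable_one_add_of_summable hsum.neg

lemma tprod_one_sub_two_inv_pow :
    ∏' n : ℕ, (1 - (2 : ℝ)⁻¹ ^ (n + 1)) = mitGenFun 2⁻¹ := by
  refine tendsto_nhds_unique multipliable_one_sub_two_inv_pow.hasProd.tendsto_prod_nat ?_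
  have hquot : Tendsto (fun N : ℕ => mitGenFun 2⁻¹ / mitGenFun (2⁻¹ ^ (N + 1))) atTop
      (𝓝 (mitGenFun 2⁻¹ / 1)) :=
    tendsto_const_nhds.div tendsto_mitGenFun_two_inv_pow one_ne_zero
  rw [div_one] at hquot
  refine hquot.congr' ?_
  filter_upwards [tendsto_mitGenFun_two_inv_pow.eventually_ne one_ne_zero] with N hN
  rw [mitGenFun_two_inv_eq_prod_mul N, mul_div_cancel_right₀ _ hN]

lemma mitGenFun_two_inv_pos : 0 < mitGenFun 2⁻¹ := by
  obtain ⟨N, hN⟩ := (tendsto_mitGenFun_two_inv_pow.eventually_const_lt zero_lt_one).exists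
  rw [mitGenFun_two_inv_eq_prod_mul N]
  refine mul_pos (Finset.prod_pos fun k _ => ?_) hN
  exact sub_pos.2 (pow_lt_one₀ (by norm_num) (by norm_num) (by omega))

noncomputable def mitLacunary (u : ℝ) : ℝ := ∑' n, mitCoef n * u ^ (2 ^ n - 1)

lemma abs_mitCoef_mul_pow_le {u : ℝ} (hu : |u| ≤ 1) (n k : ℕ) :
    |mitCoef n * u ^ k| ≤ |mitCoef n| := by
  rw [abs_mul, abs_pow]
  exact mul_le_of_le_one_right (abs_nonneg _) (pow_le_one₀ (abs_nonneg u) hu)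

lemma summable_mitLacunary {u : ℝ} (hu : |u| ≤ 1) :
    Summable fun n => mitCoef n * u ^ (2 ^ n - 1) :=
  Summable.of_norm_bounded summable_abs_mitCoef fun n => abs_mitCoef_mul_pow_le hu n _

lemma continuousOn_mitLacunary : ContinuousOn mitLacunary (Icc (-1) 1) :=
  continuousOn_tsum (fun _ => (continuous_const.mul (continuous_pow _)).continuousOn)
    summable_abs_mitCoef fun n _ hu => abs_mitCoef_mul_pow_le (abs_le.2 hu) n _

lemma mitLacunary_zero : mitLacunary 0 = 1 := by
  rw [mitLacunary, tsum_eq_single 0 fun n hn => ?_]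
  · simp [mitCoef_zero]
  have : 2 ^ n - 1 ≠ 0 := by
    have := Nat.one_lt_two_pow hn
    omega
  rw [zero_pow this, mul_zero]

lemma mitLacunary_one : mitLacunary 1 = 0 := by
  rw [← mitGenFun_one, mitLacunary, mitGenFun]
  simp only [one_pow]

lemma hasDerivAt_mitLacunary {u : ℝ} (hu : u ∈ Ioo (-1) 1) :
    HasDerivAt mitLacunary (-2 * mitLacunary (u ^ 2)) u := by
  set g' : ℕ → ℝ → ℝ := fun n v => mitCoef n * (((2 ^ n - 1 : ℕ) : ℝ) * v ^ (2 ^ n - 1 - 1))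
  have hbound : ∀ n, ∀ v ∈ Ioo (-1 : ℝ) 1, ‖g' n v‖ ≤ |mitCoef n| * 2 ^ n := by
    intro n v hv
    have hcoef : ((2 ^ n - 1 : ℕ) : ℝ) ≤ 2 ^ n := by
      exact_mod_cast (Nat.sub_le _ _).trans_eq (by norm_num)
    rw [Real.norm_eq_abs, abs_mul, abs_mul, abs_pow, Nat.abs_cast]
    gcongr
    exact (mul_le_mul hcoef (pow_le_one₀ (abs_nonneg v) (abs_le.2 ⟨hv.1.le, hv.2.le⟩))
      (by positivity) (by positivity)).trans_eq (mul_one _)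
  have hderiv := hasDerivAt_tsum_of_isPreconnected summable_abs_mitCoef_mul_two_pow isOpen_Ioo
    isPreconnected_Ioo (g' := g') (fun n v _ => (hasDerivAt_pow _ v).const_mul (mitCoef n))
    hbound (y₀ := 0) (by norm_num) (summable_mitLacunary (by norm_num)) hu
  have hsq : |u ^ 2| ≤ 1 := by
    rw [abs_pow]
    exact pow_le_one₀ (abs_nonneg u) (abs_le.2 ⟨hu.1.le, hu.2.le⟩)
  have hsum : HasSum (fun n => g' n u) (-2 * mitLacunary (u ^ 2)) := by
    rw [← hasSum_nat_add_iff' 1, Finset.sum_range_one, show g' 0 u = 0 by simp [g'], sub_zero]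
    refine ((summable_mitLacunary hsq).hasSum.mul_left (-2)).congr_fun fun n => ?_
    have hpow : 1 ≤ 2 ^ n := Nat.one_le_two_pow
    have hexp : 2 ^ (n + 1) - 1 - 1 = 2 * (2 ^ n - 1) := by rw [pow_succ]; omega
    have hcast : ((2 ^ (n + 1) - 1 : ℕ) : ℝ) = -(1 - 2 ^ (n + 1)) := by
      rw [Nat.cast_sub (by rw [pow_succ]; omega)]
      push_cast
      ring
    simp only [g', hexp, pow_mul, hcast]
    linear_combination (-(u ^ 2) ^ (2 ^ n - 1)) * mitCoef_succ_mul n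
  exact hsum.tsum_eq ▸ hderiv

lemma continuousOn_Ioo_mitLacunary : ContinuousOn mitLacunary (Ioo (-1) 1) :=
  continuousOn_mitLacunary.mono Ioo_subset_Icc_self

lemma intervalIntegrable_mitLacunary {a b : ℝ} (ha : a ∈ Ioo (-1) 1) (hb : b ∈ Ioo (-1) 1) :
    IntervalIntegrable mitLacunary volume a b :=
  (continuousOn_Ioo_mitLacunary.mono (ordConnected_Ioo.uIcc_subset ha hb)).intervalIntegrable

lemma sq_mem_Ioo_neg_one_one {u : ℝ} (hu : u ∈ Ioo (-1 : ℝ) 1) : u ^ 2 ∈ Ioo (-1 : ℝ) 1 := by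
  have : |u| < 1 := abs_lt.2 hu
  constructor <;> nlinarith [abs_nonneg u, sq_abs u]

/-- Both sides vanish at `0` and, by `G' (u) = -2 G (u ^ 2)`, have the same derivative
`G u - 2 u G (u ^ 2)`. -/
lemma mul_mitLacunary_eq_integral {u : ℝ} (hu : u ∈ Ioo (-1) 1) :
    u * mitLacunary u = ∫ t in u ^ 2..u, mitLacunary t := by
  set Φ : ℝ → ℝ := fun y => ∫ t in (0 : ℝ)..y, mitLacunary t
  have h0 : (0 : ℝ) ∈ Ioo (-1) 1 := by norm_num
  have hΦ : ∀ y ∈ Ioo (-1 : ℝ) 1, HasDerivAt Φ (mitLacunary y) y := fun y hy =>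
    intervalIntegral.integral_hasDerivAt_right (intervalIntegrable_mitLacunary h0 hy)
      (continuousOn_Ioo_mitLacunary.stronglyMeasurableAtFilter isOpen_Ioo y hy)
      (hasDerivAt_mitLacunary hy).continuousAt
  have hlhs : ∀ v ∈ Ioo (-1 : ℝ) 1, HasDerivAt (fun v => v * mitLacunary v)
      (1 * mitLacunary v + v * (-2 * mitLacunary (v ^ 2))) v := fun v hv =>
    (hasDerivAt_id v).mul (hasDerivAt_mitLacunary hv)
  have hrhs : ∀ v ∈ Ioo (-1 : ℝ) 1, HasDerivAt (fun v => Φ v - Φ (v ^ 2))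
      (mitLacunary v - mitLacunary (v ^ 2) * (2 * v)) v := fun v hv => by
    have hsq : HasDerivAt (fun v : ℝ => v ^ 2) (2 * v) v := by
      simpa using hasDerivAt_pow 2 v
    exact (hΦ v hv).sub (HasDerivAt.comp (h₂ := Φ) v (hΦ _ (sq_mem_Ioo_neg_one_one hv)) hsq)
  have heq : u * mitLacunary u = Φ u - Φ (u ^ 2) := isOpen_Ioo.eqOn_of_deriv_eq isPreconnected_Ioo
    (fun v hv => (hlhs v hv).differentiableAt.differentiableWithinAt)
    (fun v hv => (hrhs v hv).differentiableAt.differentiableWithinAt)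
    (fun v hv => by rw [(hlhs v hv).deriv, (hrhs v hv).deriv]; ring) h0 (by simp [Φ]) hu
  rw [heq, intervalIntegral.integral_interval_sub_left (intervalIntegrable_mitLacunary h0 hu)
    (intervalIntegrable_mitLacunary h0 (sq_mem_Ioo_neg_one_one hu))]

lemma mitLacunary_pos {u : ℝ} (hu : u ∈ Ico 0 1) : 0 < mitLacunary u := by
  by_contra! hneg
  have hclosed : IsClosed (Icc 0 u ∩ mitLacunary ⁻¹' Iic 0) :=
    (continuousOn_mitLacunary.mono (Icc_subset_Icc (by norm_num) hu.2.le))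
      |>.preimage_isClosed_of_isClosed isClosed_Icc isClosed_Iic
  obtain ⟨u₀, ⟨⟨hu₀0, hu₀u⟩, hGu₀⟩, hleast⟩ :=
    (isCompact_Icc.of_isClosed_subset hclosed inter_subset_left).exists_isLeast
      ⟨u, ⟨hu.1, le_rfl⟩, hneg⟩
  have hu₀pos : 0 < u₀ := by
    refine hu₀0.lt_of_ne ?_
    rintro rfl
    rw [mem_preimage, mitLacunary_zero] at hGu₀
    exact absurd hGu₀ (by norm_num)
  have hu₀1 : u₀ < 1 := hu₀u.trans_lt hu.2
  have hu₀mem : u₀ ∈ Ioo (-1 : ℝ) 1 := ⟨by linarith, hu₀1⟩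
  have hsq : u₀ ^ 2 < u₀ := by nlinarith
  have hint : 0 < ∫ t in u₀ ^ 2..u₀, mitLacunary t := by
    refine intervalIntegral.intervalIntegral_pos_of_pos_on
      (intervalIntegrable_mitLacunary (sq_mem_Ioo_neg_one_one hu₀mem) hu₀mem) (fun t ht => ?_) hsq
    by_contra! ht0
    have := hleast ⟨⟨by nlinarith [ht.1], by linarith [ht.2]⟩, ht0⟩
    linarith [ht.2]
  rw [← mul_mitLacunary_eq_integral hu₀mem] at hint
  exact hint.not_ge (mul_nonpos_of_nonneg_of_nonpos hu₀0 hGu₀)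

lemma mitLacunary_nonneg {u : ℝ} (hu : u ∈ Icc 0 1) : 0 ≤ mitLacunary u := by
  rcases hu.2.lt_or_eq with hlt | rfl
  · exact (mitLacunary_pos ⟨hu.1, hlt⟩).le
  · exact mitLacunary_one.ge

lemma mitDensity_eq_mul_mitLacunary (r x : ℝ) :
    mitDensity r x = Real.exp (-(2 * r * x)) * mitLacunary (Real.exp (-(2 * r * x))) := by
  rw [mitDensity, mitLacunary, ← tsum_mul_left]
  congr 1
  funext n
  have hexp : Real.exp (-(2 ^ (n + 1) * r * x)) = Real.exp (-(2 * r * x)) ^ (2 ^ n) := by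
    rw [← Real.exp_nat_mul]
    push_cast
    ring_nf
  rw [hexp, ← Nat.sub_add_cancel (Nat.one_le_two_pow (n := n)), pow_succ, Nat.add_sub_cancel]
  ring

lemma exp_neg_mul_mem_Ioo {r x : ℝ} (hr : 0 < r) (hx : 0 < x) :
    Real.exp (-(2 * r * x)) ∈ Ioo (-1) 1 :=
  ⟨by linarith [Real.exp_pos (-(2 * r * x))], Real.exp_lt_one_iff.2 (by nlinarith)⟩

lemma hasDerivAt_mitDensity {r x : ℝ} (hr : 0 < r) (hx : 0 < x) :
    HasDerivAt (mitDensity r) (4 * r * mitDensity r (2 * x) - 2 * r * mitDensity r x) x := by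
  set E : ℝ → ℝ := fun y => Real.exp (-(2 * r * y))
  have hE : HasDerivAt E (-(2 * r) * E x) x := by
    simpa [E, mul_comm] using ((hasDerivAt_id x).const_mul (-(2 * r))).exp
  have hG := (hasDerivAt_mitLacunary (exp_neg_mul_mem_Ioo hr hx)).comp x hE
  have hE2 : Real.exp (-(2 * r * (2 * x))) = Real.exp (-(2 * r * x)) ^ 2 := by
    rw [← Real.exp_nat_mul]
    ring_nf
  have hp : mitDensity r = fun y => E y * mitLacunary (E y) :=
    funext (mitDensity_eq_mul_mitLacunary r)
  rw [hp]
  refine (hE.mul hG).congr_deriv ?_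
  simp only [E, Function.comp_apply, hE2]
  ring

lemma mitDensity_nonneg {r x : ℝ} (hr : 0 ≤ r) (hx : 0 ≤ x) : 0 ≤ mitDensity r x := by
  rw [mitDensity_eq_mul_mitLacunary]
  have hE : Real.exp (-(2 * r * x)) ≤ 1 := Real.exp_le_one_iff.2 (by nlinarith)
  exact mul_nonneg (Real.exp_pos _).le (mitLacunary_nonneg ⟨(Real.exp_pos _).le, hE⟩)

lemma summable_abs_mitDensity_term {r x : ℝ} (hr : 0 ≤ r) (hx : 0 ≤ x) :
    Summable fun n : ℕ => |mitCoef n * Real.exp (-(2 ^ (n + 1) * r * x))| := by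
  refine summable_abs_mitCoef.of_nonneg_of_le (fun _ => abs_nonneg _) fun n => ?_
  rw [abs_mul, Real.abs_exp]
  exact mul_le_of_le_one_right (abs_nonneg _) (Real.exp_le_one_iff.2 (by
    have : 0 ≤ 2 ^ (n + 1) * r * x := by positivity
    linarith))

lemma integral_exp_neg_mul_Ioi_zero {b : ℝ} (hb : 0 < b) :
    ∫ x in Ioi (0 : ℝ), Real.exp (-(b * x)) = b⁻¹ := by
  simp_rw [← neg_mul]
  rw [integral_exp_mul_Ioi (neg_neg_of_pos hb), mul_zero, Real.exp_zero]
  field_simp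

lemma integrableOn_exp_neg_mul_Ioi_zero {b : ℝ} (hb : 0 < b) :
    IntegrableOn (fun x => Real.exp (-(b * x))) (Ioi 0) := by
  simp_rw [← neg_mul]
  exact integrableOn_exp_mul_Ioi (neg_neg_of_pos hb) 0

lemma integral_mitDensity {r : ℝ} (hr : 0 < r) :
    ∫ x in Ioi (0 : ℝ), mitDensity r x = 1 / (2 * r) * mitGenFun 2⁻¹ := by
  have hb : ∀ n : ℕ, 0 < (2 : ℝ) ^ (n + 1) * r := fun n => by positivity
  have hterm : ∀ n : ℕ, (2 ^ (n + 1) * r)⁻¹ = 1 / (2 * r) * (2 : ℝ)⁻¹ ^ n := fun n => by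
    rw [pow_succ, inv_pow]
    field_simp
  have hnorm : ∀ n : ℕ, ∫ x in Ioi (0 : ℝ), ‖mitCoef n * Real.exp (-(2 ^ (n + 1) * r * x))‖ =
      1 / (2 * r) * |mitCoef n * (2 : ℝ)⁻¹ ^ n| := fun n => by
    simp_rw [Real.norm_eq_abs, abs_mul, Real.abs_exp]
    rw [integral_const_mul, integral_exp_neg_mul_Ioi_zero (hb n), hterm,
      abs_of_nonneg (by positivity : (0 : ℝ) ≤ 2⁻¹ ^ n)]
    ring
  have hswap := integral_tsum_of_summable_integral_norm
    (fun n => (integrableOn_exp_neg_mul_Ioi_zero (hb n)).const_mul (mitCoef n))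
    (by simpa only [hnorm] using (summable_abs_mitCoef_mul_pow (q := 2⁻¹)
      (by norm_num)).mul_left (1 / (2 * r)))
  simp only [integral_const_mul, integral_exp_neg_mul_Ioi_zero (hb _), hterm] at hswap
  unfold mitDensity
  rw [← hswap, mitGenFun, ← tsum_mul_left]
  exact tsum_congr fun n => by ring

section CompactlySupported

variable {f p : ℝ → ℝ} {s : Set ℝ}

lemma integrable_mul_of_tsupport_subset (hs : IsOpen s) (hf : Continuous f)
    (hfc : HasCompactSupport f) (hfs : tsupport f ⊆ s) (hp : ContinuousOn p s) :
    Integrable fun x => f x * p x :=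
  ((hf.continuousOn.mul hp).continuous_of_tsupport_subset hs
    (tsupport_mul_subset_left.trans hfs)).integrable_of_hasCompactSupport hfc.mul_right

lemma integral_deriv_mul_eq_neg_integral_mul_deriv {p' : ℝ → ℝ} (hs : IsOpen s)
    (hf : ContDiff ℝ 1 f) (hfc : HasCompactSupport f) (hfs : tsupport f ⊆ s)
    (hp : ∀ x ∈ s, HasDerivAt p (p' x) x) (hp' : ContinuousOn p' s) :
    ∫ x, deriv f x * p x = -∫ x, f x * p' x := by
  have hpc : ContinuousOn p s := fun x hx => (hp x hx).continuousAt.continuousWithinAt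
  have hderiv : ∀ x, HasDerivAt (fun x => f x * p x) (deriv f x * p x + f x * p' x) x := by
    intro x
    by_cases hx : x ∈ tsupport f
    · exact (hf.differentiable one_ne_zero x).hasDerivAt.mul (hp x (hfs hx))
    · rw [deriv_of_notMem_tsupport hx, image_eq_zero_of_notMem_tsupport hx, zero_mul, zero_mul,
        add_zero]
      exact HasDerivAt.of_notMem_tsupport fun h => hx (tsupport_mul_subset_left h)
  have hint₁ : Integrable fun x => deriv f x * p x :=
    integrable_mul_of_tsupport_subset hs (hf.continuous_deriv le_rfl) hfc.deriv
      (tsupport_deriv_subset.trans hfs) hpc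
  have hint₂ : Integrable fun x => f x * p' x :=
    integrable_mul_of_tsupport_subset hs hf.continuous hfc hfs hp'
  have hzero := integral_eq_zero_of_hasDerivAt_of_integrable hderiv (hint₁.add hint₂)
    (integrable_mul_of_tsupport_subset hs hf.continuous hfc hfs hpc)
  rw [integral_add hint₁ hint₂] at hzero
  linarith

end CompactlySupported

lemma integral_comp_half_mul (f p : ℝ → ℝ) : ∫ x, f (x / 2) * p x = 2 * ∫ x, f x * p (2 * x) := by
  have := Measure.integral_comp_div (fun y => f y * p (2 * y)) 2
  simpa only [show ∀ x : ℝ, 2 * (x / 2) = x from fun x => by ring, abs_two, smul_eq_mul] using this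

lemma MeasureTheory.Integrable.comp_half_mul {f p : ℝ → ℝ} (h : Integrable fun x => f x * p (2 * x)) :
    Integrable fun x => f (x / 2) * p x := by
  simpa only [show ∀ x : ℝ, 2 * (x / 2) = x from fun x => by ring] using h.comp_div two_ne_zero

lemma integral_tcpGenerator_mul_eq_zero {r : ℝ} {p : ℝ → ℝ}
    (hp : ∀ x > 0, HasDerivAt p (4 * r * p (2 * x) - 2 * r * p x) x) {f : ℝ → ℝ}
    (hf : ContDiff ℝ 1 f) (hfc : HasCompactSupport f) (hfs : tsupport f ⊆ Ioi 0) :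
    ∫ x in Ioi 0, (deriv f x + 2 * r * (f (x / 2) - f x)) * p x = 0 := by
  have hpc : ContinuousOn p (Ioi 0) := fun x hx => (hp x hx).continuousAt.continuousWithinAt
  have hp2c : ContinuousOn (fun x => p (2 * x)) (Ioi 0) := fun x hx =>
    ((hp (2 * x) (by simp only [mem_Ioi] at hx ⊢; linarith)).continuousAt.comp
      (continuous_const_mul 2).continuousAt).continuousWithinAt
  have hfp := integrable_mul_of_tsupport_subset isOpen_Ioi hf.continuous hfc hfs hpc
  have hfp2 := integrable_mul_of_tsupport_subset isOpen_Ioi hf.continuous hfc hfs hp2c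
  have hf'p := integrable_mul_of_tsupport_subset isOpen_Ioi (hf.continuous_deriv le_rfl)
    hfc.deriv (tsupport_deriv_subset.trans hfs) hpc
  have hfhalf := hfp2.comp_half_mul
  have hparts := integral_deriv_mul_eq_neg_integral_mul_deriv isOpen_Ioi hf hfc hfs hp
    ((hp2c.const_mul (4 * r)).sub (hpc.const_mul (2 * r)))
  have hrhs : ∫ x, f x * (4 * r * p (2 * x) - 2 * r * p x) =
      4 * r * (∫ x, f x * p (2 * x)) - 2 * r * ∫ x, f x * p x := by
    simp_rw [mul_sub, mul_left_comm (f _)]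
    rw [integral_sub (hfp2.const_mul _) (hfp.const_mul _), integral_const_mul, integral_const_mul]
  have hexpand : (fun x => (deriv f x + 2 * r * (f (x / 2) - f x)) * p x) =
      fun x => deriv f x * p x + (2 * r * (f (x / 2) * p x) - 2 * r * (f x * p x)) := by
    funext x
    ring
  have hrest : Integrable fun x => 2 * r * (f (x / 2) * p x) - 2 * r * (f x * p x) :=
    (hfhalf.const_mul _).sub (hfp.const_mul _)
  rw [setIntegral_eq_integral_of_forall_compl_eq_zero fun x hx => ?_]
  · rw [hexpand, integral_add hf'p hrest,
      integral_sub (hfhalf.const_mul _) (hfp.const_mul _), integral_const_mul, integral_const_mul,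
      hparts, hrhs, integral_comp_half_mul]
    ring
  have hout : ∀ y ≤ 0, y ∉ tsupport f := fun y hy hmem => (hfs hmem).not_ge hy
  rw [mem_Ioi, not_lt] at hx
  rw [deriv_of_notMem_tsupport (hout x hx), image_eq_zero_of_notMem_tsupport (hout x hx),
    image_eq_zero_of_notMem_tsupport (hout (x / 2) (by linarith))]
  ring

/-- **Explicit invariant density of the TCP process with constant rate `r`.**
The series defining `p` converges absolutely on `[0,∞)`; `p` is differentiable on
`(0,∞)` with `p'(x) = 4r p(2x) − 2r p(x)`; `p ≥ 0`; `∫₀^∞ p = (1/(2r)) ∏ₙ(1 − 2^{−n})`;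
hence `φ = (2r/∏ₙ(1 − 2^{−n})) p` is a probability density on `(0,∞)`, and
`∫₀^∞ [f'(x) + 2r(f(x/2) − f(x))] φ(x) dx = 0` for every `C¹` function `f` with compact
support contained in `(0,∞)`. -/
theorem tcp_invariant_density (r : ℝ) (hr : 0 < r) :
    (∀ x ≥ (0 : ℝ),
      Summable fun n : ℕ => |mitCoef n * Real.exp (-(2 ^ (n + 1) * r * x))|) ∧
    (∀ x > (0 : ℝ),
      HasDerivAt (mitDensity r) (4 * r * mitDensity r (2 * x) - 2 * r * mitDensity r x) x) ∧
    (∀ x ≥ (0 : ℝ), 0 ≤ mitDensity r x) ∧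
    (∫ x in Set.Ioi (0 : ℝ), mitDensity r x
        = 1 / (2 * r) * ∏' n : ℕ, (1 - (2 : ℝ)⁻¹ ^ (n + 1))) ∧
    (∀ x ≥ (0 : ℝ),
      0 ≤ (2 * r / ∏' n : ℕ, (1 - (2 : ℝ)⁻¹ ^ (n + 1))) * mitDensity r x) ∧
    (∫ x in Set.Ioi (0 : ℝ),
        (2 * r / ∏' n : ℕ, (1 - (2 : ℝ)⁻¹ ^ (n + 1))) * mitDensity r x = 1) ∧
    (∀ f : ℝ → ℝ, ContDiff ℝ 1 f → HasCompactSupport f → tsupport f ⊆ Set.Ioi 0 →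
      ∫ x in Set.Ioi (0 : ℝ),
          (deriv f x + 2 * r * (f (x / 2) - f x)) *
            ((2 * r / ∏' n : ℕ, (1 - (2 : ℝ)⁻¹ ^ (n + 1))) * mitDensity r x) = 0) := by
  rw [tprod_one_sub_two_inv_pow]
  have hnorm : 0 < 2 * r / mitGenFun 2⁻¹ := div_pos (by positivity) mitGenFun_two_inv_pos
  refine ⟨fun x hx => summable_abs_mitDensity_term hr.le hx,
    fun x hx => hasDerivAt_mitDensity hr hx, fun x hx => mitDensity_nonneg hr.le hx,
    integral_mitDensity hr, fun x hx => mul_nonneg hnorm.le (mitDensity_nonneg hr.le hx), ?_,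
    fun f hf hfc hfs => integral_tcpGenerator_mul_eq_zero (fun x hx => ?_) hf hfc hfs⟩
  · rw [integral_const_mul, integral_mitDensity hr]
    field_simp [mitGenFun_two_inv_pos.ne']
  · exact ((hasDerivAt_mitDensity hr hx).const_mul _).congr_deriv (by ring)
end

section
/- Let p ≥ 1 be a real number. There exists a constant C > 0, depending only on p, such that for every continuously differentiable function f : [0,∞) → ℝ with compact support, sup_{x ≥ 0} |f(x)|/(1 + x^p) ≤ C·( ∫₀^∞ (f(x)/(1 + x^p))² dx + ∫₀^∞ (f'(x)/(1 + x^p))² dx )^{1/2}. -/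
open MeasureTheory Set Filter

/-!
Put `u = f / w` with `w y = 1 + y ^ p`. Since `u` vanishes far out, `u x ^ 2` is bounded by the
integral over `[x, ∞)` of `-(u ^ 2)' = -2 u (f' / w - u w' / w)`. Because `p ≥ 1`, the weight
grows at most exponentially, `w' = p y ^ (p - 1) ≤ p w`, so pointwise
`-(u ^ 2)' ≤ (1 + 2 p) (u ^ 2 + (f' / w) ^ 2)`, and `C = √(1 + 2 p)` works.
-/

theorem Real.rpow_sub_one_le_one_add_rpow {p y : ℝ} (hp : 1 ≤ p) (hy : 0 ≤ y) :
    y ^ (p - 1) ≤ 1 + y ^ p := by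
  rcases le_or_gt y 1 with hy1 | hy1
  · linarith [Real.rpow_le_one hy hy1 (by linarith : 0 ≤ p - 1), Real.rpow_nonneg hy p]
  · linarith [Real.rpow_le_rpow_of_exponent_le hy1.le (by linarith : p - 1 ≤ p)]

theorem neg_two_mul_mul_sub_mul_le {u v r K : ℝ} (hK : 0 ≤ K) (hr : r ≤ K) :
    -(2 * u * (v - u * r)) ≤ (1 + 2 * K) * (u ^ 2 + v ^ 2) := by
  nlinarith [sq_nonneg (u + v), mul_le_mul_of_nonneg_left hr (sq_nonneg u), sq_nonneg v]

theorem HasCompactSupport.exists_gt_eq_zero {f : ℝ → ℝ} (hf : HasCompactSupport f) (x : ℝ) :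
    ∃ T > x, f T = 0 :=
  ((hasCompactSupport_iff_eventuallyEq.mp hf).filter_mono
    (atTop_le_cocompact.trans cocompact_le_coclosedCompact) |>.and
    (eventually_gt_atTop x)).exists.imp fun _ h => ⟨h.2, h.1⟩

theorem HasCompactSupport.integrableOn_of_continuousOn {α : Type*} [TopologicalSpace α]
    [T2Space α] [MeasurableSpace α] [OpensMeasurableSpace α] {μ : Measure α}
    [IsFiniteMeasureOnCompacts μ] {f : α → ℝ} {s : Set α}
    (hf : HasCompactSupport f) (hcont : ContinuousOn f s) (hs : IsClosed s) :
    IntegrableOn f s μ :=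
  (hcont.mono inter_subset_left).integrableOn_compact (hf.inter_left hs)
    |>.of_forall_sdiff_eq_zero hs.measurableSet
    fun _ hy => image_eq_zero_of_notMem_tsupport fun h => hy.2 ⟨hy.1, h⟩

theorem HasDerivAt.div_sq {f w : ℝ → ℝ} {f' w' x : ℝ} (hf : HasDerivAt f f' x)
    (hw : HasDerivAt w w' x) (hwx : w x ≠ 0) :
    HasDerivAt (fun y => (f y / w y) ^ 2)
      (2 * (f x / w x) * (f' / w x - f x / w x * (w' / w x))) x :=
  ((hf.fun_div hw hwx).fun_pow 2).congr_deriv <| by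
    simp only [Nat.cast_ofNat, Nat.add_one_sub_one, pow_one]
    field_simp

theorem sq_div_le_integral_of_deriv_le_mul {w w' : ℝ → ℝ} {K : ℝ} (hK : 0 ≤ K)
    (hw : ∀ y ≥ 0, HasDerivAt w (w' y) y) (hw_pos : ∀ y ≥ 0, 0 < w y)
    (hw' : ∀ y ≥ 0, w' y ≤ K * w y) {f : ℝ → ℝ} (hf : ContDiff ℝ 1 f)
    (hfc : HasCompactSupport f) {x : ℝ} (hx : 0 ≤ x) :
    (f x / w x) ^ 2 ≤ (1 + 2 * K) *
      ((∫ y in Ioi 0, (f y / w y) ^ 2) + ∫ y in Ioi 0, (deriv f y / w y) ^ 2) := by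
  set u := fun y => f y / w y
  set v := fun y => deriv f y / w y
  have hw_cont : ContinuousOn w (Ici 0) := fun y hy => (hw y hy).continuousAt.continuousWithinAt
  have hint {g : ℝ → ℝ} (hg : Continuous g) (hgc : HasCompactSupport g) :
      ContinuousOn (fun y => (g y / w y) ^ 2) (Ici 0) ∧
        IntegrableOn (fun y => (g y / w y) ^ 2) (Ici 0) :=
    have hcont : ContinuousOn (fun y => (g y / w y) ^ 2) (Ici 0) :=
      (hg.continuousOn.div hw_cont fun y hy => (hw_pos y hy).ne').pow 2
    ⟨hcont, (hgc.mono fun y hy hgy => hy (by simp [hgy])).integrableOn_of_continuousOn hcont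
      isClosed_Ici⟩
  obtain ⟨hu_cont, hu⟩ := hint hf.continuous hfc
  obtain ⟨-, hv⟩ := hint (hf.continuous_deriv le_rfl) hfc.deriv
  set φ := fun y => (1 + 2 * K) * (u y ^ 2 + v y ^ 2)
  have hφ : IntegrableOn φ (Ici 0) := (hu.add hv).const_mul _
  obtain ⟨T, hxT, hfT⟩ := hfc.exists_gt_eq_zero x
  have hIcc : Icc x T ⊆ Ici 0 := fun y hy => hx.trans hy.1
  have hFTC : -u T ^ 2 - -u x ^ 2 ≤ ∫ y in x..T, φ y := by
    refine intervalIntegral.sub_le_integral_of_hasDeriv_right_of_le (g := fun y => -u y ^ 2)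
      (g' := fun y => -(2 * u y * (v y - u y * (w' y / w y)))) hxT.le
      (hu_cont.neg.mono hIcc) (fun y hy => ?_) (hφ.mono_set hIcc) (fun y hy => ?_)
    · have hy : 0 ≤ y := hx.trans hy.1.le
      exact (((hf.differentiable one_ne_zero y).hasDerivAt.div_sq (hw y hy)
        (hw_pos y hy).ne').neg).hasDerivWithinAt
    · have hy : 0 ≤ y := hx.trans hy.1.le
      exact neg_two_mul_mul_sub_mul_le hK ((div_le_iff₀ (hw_pos y hy)).mpr (hw' y hy))
  have hφ_le : ∫ y in x..T, φ y ≤ ∫ y in Ioi 0, φ y := by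
    rw [intervalIntegral.integral_of_le hxT.le]
    exact setIntegral_mono_set (hφ.mono_set Ioi_subset_Ici_self)
      (ae_of_all _ fun y => by positivity)
      (Ioc_subset_Ioi_self.trans (Ioi_subset_Ioi hx)).eventuallyLE
  have huT : u T = 0 := by simp [u, hfT]
  calc (f x / w x) ^ 2 = -u T ^ 2 - -u x ^ 2 := by simp [huT, u]
    _ ≤ ∫ y in Ioi 0, φ y := hFTC.trans hφ_le
    _ = _ := by
      rw [integral_const_mul, integral_add (hu.mono_set Ioi_subset_Ici_self)
        (hv.mono_set Ioi_subset_Ici_self)]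

/-- **Continuous Sobolev embedding `W^{1,p} ⊂ C^{0,p}`.**
For every `p ≥ 1` there is a constant `C > 0` such that every compactly supported `C¹`
function `f` satisfies
`sup_{x ≥ 0} |f(x)|/(1 + x^p) ≤ C (‖f/(1+x^p)‖_{L²(0,∞)}² + ‖f'/(1+x^p)‖_{L²(0,∞)}²)^{1/2}`. -/
theorem weighted_sobolev_embedding (p : ℝ) (hp : 1 ≤ p) :
    ∃ C > (0 : ℝ), ∀ f : ℝ → ℝ, ContDiff ℝ 1 f → HasCompactSupport f →
      ∀ x ≥ (0 : ℝ),
        |f x| / (1 + x ^ p) ≤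
          C * Real.sqrt
            ((∫ y in Set.Ioi (0 : ℝ), (f y / (1 + y ^ p)) ^ 2) +
              ∫ y in Set.Ioi (0 : ℝ), (deriv f y / (1 + y ^ p)) ^ 2) := by
  have hp0 : 0 ≤ p := zero_le_one.trans hp
  refine ⟨√(1 + 2 * p), by positivity, fun f hf hfc x hx => ?_⟩
  have hw_pos (y : ℝ) (hy : 0 ≤ y) : 0 < 1 + y ^ p := by positivity
  have key := sq_div_le_integral_of_deriv_le_mul hp0
    (fun y _ => (Real.hasDerivAt_rpow_const (Or.inr hp)).const_add 1) hw_pos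
    (fun y hy => mul_le_mul_of_nonneg_left (Real.rpow_sub_one_le_one_add_rpow hp hy) hp0) hf hfc hx
  rw [← Real.sqrt_mul (by positivity), ← abs_of_pos (hw_pos x hx), ← abs_div]
  exact Real.abs_le_sqrt key
end

section
/- Let σ ≥ 0 and let b : ℝ → ℝ be bounded and measurable. Then there exist a constant C > 0 and, for each integer k ≥ 1, a twice continuously differentiable function ψ_k : ℝ → [0,1] such that for all integers k ≥ 1 and all x ∈ ℝ: 1_{[k,∞)}(x) ≤ ψ_k(x) ≤ 1_{[k−1,∞)}(x), and b(x)·ψ_k'(x) + σ·ψ_k''(x) ≤ C·ψ_{k−1}(x). -/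
open Real Set

local notation "φ" => Real.smoothTransition

private lemma st_vanish_aux (g : ℝ → ℝ) (hc : Continuous g)
    (h0 : ∀ s : ℝ, s < 0 → g s = 0) (h1 : ∀ s : ℝ, 1 < s → g s = 0) :
    ∀ t : ℝ, t ≤ 0 ∨ 1 ≤ t → g t = 0 := by
  intro t h
  rcases h with h | h
  · have heq : Set.EqOn g 0 (Iio 0) := fun s hs => h0 s hs
    have := heq.closure hc continuous_const
    simpa using this (by simpa [closure_Iio] using h : t ∈ closure (Iio (0:ℝ)))
  · have heq : Set.EqOn g 0 (Ioi 1) := fun s hs => h1 s hs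
    have := heq.closure hc continuous_const
    simpa using this (by simpa [closure_Ioi] using h : t ∈ closure (Ioi (1:ℝ)))

private lemma deriv_st_cont : Continuous (deriv φ) :=
  (Real.smoothTransition.contDiff (n := 1)).continuous_deriv le_rfl

private lemma deriv_st_eq_zero : ∀ t : ℝ, t ≤ 0 ∨ 1 ≤ t → deriv φ t = 0 := by
  apply st_vanish_aux _ deriv_st_cont
  · intro s hs
    have : deriv φ s = deriv (fun _ : ℝ => (0:ℝ)) s := by
      apply Filter.EventuallyEq.deriv_eq
      filter_upwards [Iio_mem_nhds hs] with y hy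
      exact Real.smoothTransition.zero_of_nonpos (le_of_lt hy)
    simpa using this
  · intro s hs
    have : deriv φ s = deriv (fun _ : ℝ => (1:ℝ)) s := by
      apply Filter.EventuallyEq.deriv_eq
      filter_upwards [Ioi_mem_nhds hs] with y hy
      exact Real.smoothTransition.one_of_one_le (le_of_lt hy)
    simpa using this

private lemma deriv2_st_cont : Continuous (deriv (deriv φ)) := by
  have h := ContDiff.iterate_deriv 2 (Real.smoothTransition.contDiff (n := ⊤))
  have : deriv^[2] φ = deriv (deriv φ) := by
    simp [Function.iterate_succ, Function.iterate_one]
  rw [this] at h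
  exact h.continuous

private lemma deriv2_st_eq_zero : ∀ t : ℝ, t ≤ 0 ∨ 1 ≤ t → deriv (deriv φ) t = 0 := by
  apply st_vanish_aux _ deriv2_st_cont
  · intro s hs
    have : deriv (deriv φ) s = deriv (fun _ : ℝ => (0:ℝ)) s := by
      apply Filter.EventuallyEq.deriv_eq
      filter_upwards [Iio_mem_nhds hs] with y hy
      exact deriv_st_eq_zero y (Or.inl (le_of_lt hy))
    simpa using this
  · intro s hs
    have : deriv (deriv φ) s = deriv (fun _ : ℝ => (0:ℝ)) s := by
      apply Filter.EventuallyEq.deriv_eq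
      filter_upwards [Ioi_mem_nhds hs] with y hy
      exact deriv_st_eq_zero y (Or.inr (le_of_lt hy))
    simpa using this

private lemma st_bound_aux (g : ℝ → ℝ) (hc : Continuous g)
    (hz : ∀ t : ℝ, t ≤ 0 ∨ 1 ≤ t → g t = 0) :
    ∃ K : ℝ, 0 ≤ K ∧ ∀ t : ℝ, |g t| ≤ K := by
  obtain ⟨K, hK⟩ := (isCompact_Icc (a := (0:ℝ)) (b := 1)).exists_bound_of_continuousOn
    hc.continuousOn
  refine ⟨max K 0, le_max_right _ _, fun t => ?_⟩
  rcases le_or_gt t 0 with h | h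
  · simp [hz t (Or.inl h)]
  rcases le_or_gt 1 t with h' | h'
  · simp [hz t (Or.inr h')]
  · exact le_trans (hK t ⟨h.le, h'.le⟩) (le_max_left _ _)

/-- **Smooth approximations of indicator functions dominated by the generator.**
For `Gf(x) = b(x)f'(x) + σf''(x)` with `b` bounded measurable and `σ ≥ 0`, there are a
constant `C > 0` and `C²` functions `ψ_k : ℝ → [0,1]` such that
`1_{[k,∞)} ≤ ψ_k ≤ 1_{[k−1,∞)}` and `Gψ_k ≤ C ψ_{k−1}` for every `k ≥ 1`. -/
theorem smooth_indicator_approximation (σ : ℝ) (hσ : 0 ≤ σ)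
    (b : ℝ → ℝ) (hb_meas : Measurable b) (hb_bdd : ∃ M : ℝ, ∀ x, |b x| ≤ M) :
    ∃ C > (0 : ℝ), ∃ ψ : ℕ → ℝ → ℝ,
      (∀ k : ℕ, ∀ x : ℝ, ψ k x ∈ Set.Icc (0 : ℝ) 1) ∧
      ∀ k : ℕ, 1 ≤ k →
        ContDiff ℝ 2 (ψ k) ∧
        ∀ x : ℝ,
          Set.indicator (Set.Ici (k : ℝ)) (fun _ => (1 : ℝ)) x ≤ ψ k x ∧
          ψ k x ≤ Set.indicator (Set.Ici ((k : ℝ) - 1)) (fun _ => (1 : ℝ)) x ∧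
          b x * deriv (ψ k) x + σ * deriv (deriv (ψ k)) x ≤ C * ψ (k - 1) x := by
  obtain ⟨M, hM⟩ := hb_bdd
  obtain ⟨K₁, hK₁0, hK₁⟩ := st_bound_aux (deriv φ) deriv_st_cont deriv_st_eq_zero
  obtain ⟨K₂, hK₂0, hK₂⟩ := st_bound_aux (deriv (deriv φ)) deriv2_st_cont deriv2_st_eq_zero
  have hM0 : (0:ℝ) ≤ max M 0 := le_max_right _ _
  set C : ℝ := max M 0 * K₁ + σ * K₂ + 1 with hC
  have hCpos : 0 < C := by positivity
  set ψ : ℕ → ℝ → ℝ := fun k x => φ (x - (k : ℝ) + 1) with hψ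
  -- derivative formulas
  have hd1 : ∀ k : ℕ, ∀ x : ℝ, deriv (ψ k) x = deriv φ (x - (k : ℝ) + 1) := by
    intro k x
    have h : ψ k = fun x => φ (x + (1 - (k:ℝ))) := by
      funext y; simp [hψ]; ring_nf
    rw [h, deriv_comp_add_const]
    ring_nf
  have hd2 : ∀ k : ℕ, ∀ x : ℝ, deriv (deriv (ψ k)) x = deriv (deriv φ) (x - (k : ℝ) + 1) := by
    intro k x
    have h1 : deriv (ψ k) = fun x => deriv φ (x + (1 - (k:ℝ))) := by
      funext y; rw [hd1 k y]; ring_nf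
    rw [h1, deriv_comp_add_const]
    ring_nf
  refine ⟨C, hCpos, ψ, fun k x => ⟨Real.smoothTransition.nonneg _,
    Real.smoothTransition.le_one _⟩, fun k hk => ⟨?_, fun x => ⟨?_, ?_, ?_⟩⟩⟩
  · exact (Real.smoothTransition.contDiff).comp
      ((contDiff_id.sub contDiff_const).add contDiff_const)
  · -- lower indicator bound
    by_cases hx : x ∈ Set.Ici (k : ℝ)
    · rw [Set.indicator_of_mem hx]
      have : (1:ℝ) ≤ x - (k:ℝ) + 1 := by simp at hx; linarith
      simp [hψ, Real.smoothTransition.one_of_one_le this]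
    · rw [Set.indicator_of_notMem hx]
      exact Real.smoothTransition.nonneg _
  · -- upper indicator bound
    by_cases hx : x ∈ Set.Ici ((k : ℝ) - 1)
    · rw [Set.indicator_of_mem hx]
      exact Real.smoothTransition.le_one _
    · rw [Set.indicator_of_notMem hx]
      have : x - (k:ℝ) + 1 ≤ 0 := by simp at hx; linarith
      simp [hψ, Real.smoothTransition.zero_of_nonpos this]
  · -- generator bound
    rw [hd1 k x, hd2 k x]
    set t : ℝ := x - (k : ℝ) + 1 with ht
    have hψnn : 0 ≤ ψ (k - 1) x := Real.smoothTransition.nonneg _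
    rcases le_or_gt t 0 with h0 | h0
    · rw [deriv_st_eq_zero t (Or.inl h0), deriv2_st_eq_zero t (Or.inl h0)]
      simp only [mul_zero, add_zero]
      positivity
    rcases le_or_gt 1 t with h1 | h1
    · rw [deriv_st_eq_zero t (Or.inr h1), deriv2_st_eq_zero t (Or.inr h1)]
      simp only [mul_zero, add_zero]
      positivity
    · -- here k - 1 ≤ x, so ψ (k-1) x = 1
      have hcast : ((k - 1 : ℕ) : ℝ) = (k : ℝ) - 1 := by
        have := Nat.cast_sub hk (R := ℝ)
        simpa using this
      have harg : (1:ℝ) ≤ x - ((k - 1 : ℕ) : ℝ) + 1 := by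
        rw [hcast]; simp only [ht] at h0; linarith
      have hψ1 : ψ (k - 1) x = 1 := Real.smoothTransition.one_of_one_le harg
      rw [hψ1, mul_one, hC]
      have e1 : b x * deriv φ t ≤ max M 0 * K₁ := by
        calc b x * deriv φ t ≤ |b x * deriv φ t| := le_abs_self _
          _ = |b x| * |deriv φ t| := abs_mul _ _
          _ ≤ max M 0 * K₁ := by
              apply mul_le_mul (le_trans (hM x) (le_max_left _ _)) (hK₁ t)
                (abs_nonneg _) hM0
      have e2 : σ * deriv (deriv φ) t ≤ σ * K₂ := by
        calc σ * deriv (deriv φ) t ≤ σ * |deriv (deriv φ) t| := by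
              apply mul_le_mul_of_nonneg_left (le_abs_self _) hσ
          _ ≤ σ * K₂ := mul_le_mul_of_nonneg_left (hK₂ t) hσ
      linarith
end
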